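/- arXiv:1801.06884 — 2 statements merged into one kernel-verified Lean document; each statement's English description precedes it below -/
import Mathlib

section
/- Let C be a bounded self-adjoint operator on a complex Hilbert space and T = A + iB (Cartesian decomposition) a bounded operator with T² = C. If σ(B) ∩ σ(-B) = ∅, then T is skew-adjoint (T* = -T) and invertible (in fact T = iB). -/
/-!
As `T ^ 2 = C` is self-adjoint, `(star T) ^ 2 = T ^ 2`; with `star T = A - iB` this says
`AB = -BA`, i.e. `A` intertwines `B` with `-B`. By Stone–Weierstrass, `A` then intertwines
`f(B)` with `f(-B)` for every continuous real `f`; an Urysohn function equal to `1` on `σ(B)`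
and `0` on the disjoint set `σ(-B)` gives `A = 0`. Hence `T = iB`, which is skew-adjoint, and
`B` is invertible since `0 ∈ σ(B)` would put `0` in `σ(-B)` as well.
-/

theorem IsSelfAdjoint.semiconjBy_neg_of_isSelfAdjoint_sq {R : Type*} [Ring R] [StarRing R]
    [Algebra ℂ R] [StarModule ℂ R] {a b : R} (ha : IsSelfAdjoint a) (hb : IsSelfAdjoint b)
    (h : IsSelfAdjoint ((a + Complex.I • b) ^ 2)) : SemiconjBy a b (-b) := by
  have hstar : star (a + Complex.I • b) = a + (-Complex.I) • b := by
    rw [star_add, star_smul, ha.star_eq, hb.star_eq, Complex.star_def, Complex.conj_I]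
  have hsq : ∀ c : ℂ, (a + c • b) ^ 2 = a * a + c • (a * b + b * a) + (c * c) • (b * b) := by
    intro c
    simp only [sq, add_mul, mul_add, smul_mul_assoc, mul_smul_comm, smul_add, smul_smul]
    abel
  have h2I : ((2 : ℂ) * Complex.I) • (a * b + b * a) =
      (a + Complex.I • b) ^ 2 - star ((a + Complex.I • b) ^ 2) := by
    rw [star_pow, hstar, hsq, hsq]
    module
  rw [h.star_eq, sub_self] at h2I
  have hanti : a * b + b * a = 0 := (smul_eq_zero.mp h2I).resolve_left (by simp)
  rw [SemiconjBy, neg_mul, ← add_eq_zero_iff_eq_neg, hanti]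

section Intertwining

variable {A : Type*} [Ring A] [Algebra ℝ A] [TopologicalSpace A] [IsTopologicalRing A]
  [T2Space A]

theorem ContinuousMap.semiconjBy_of_semiconjBy_restrict_id {s : Set ℝ} [CompactSpace s]
    {φ ψ : C(s, ℝ) →ₐ[ℝ] A} (hφ : Continuous φ) (hψ : Continuous ψ) {x : A}
    (h : SemiconjBy x (φ (.restrict s (.id ℝ))) (ψ (.restrict s (.id ℝ)))) (f : C(s, ℝ)) :
    SemiconjBy x (φ f) (ψ f) := by
  induction f using ContinuousMap.induction_on_of_compact with
  | const r =>
    rw [show ContinuousMap.const s r = algebraMap ℝ _ r from rfl, SemiconjBy,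
      AlgHom.commutes, AlgHom.commutes]
    exact Algebra.commute_algebraMap_right r x
  | id => exact h
  | star_id => rwa [star_trivial]
  | add f g hf hg => simpa only [map_add] using hf.add_right hg
  | mul f g hf hg => simpa only [map_mul] using hf.mul_right hg
  | frequently f hf =>
    exact (isClosed_eq (by fun_prop) (by fun_prop)).closure_subset
      (mem_closure_iff_frequently.mpr hf)

variable [StarRing A] [ContinuousFunctionalCalculus ℝ A IsSelfAdjoint]

theorem SemiconjBy.cfc_real {a b x : A} (h : SemiconjBy x a b) (ha : IsSelfAdjoint a)
    (hb : IsSelfAdjoint b) (f : ℝ → ℝ) (hf : ContinuousOn f (spectrum ℝ a ∪ spectrum ℝ b)) :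
    SemiconjBy x (cfc f a) (cfc f b) := by
  set K := spectrum ℝ a ∪ spectrum ℝ b
  have : CompactSpace K := isCompact_iff_compactSpace.mp <|
    (ContinuousFunctionalCalculus.isCompact_spectrum a).union
      (ContinuousFunctionalCalculus.isCompact_spectrum b)
  let ιa : C(spectrum ℝ a, K) := ⟨_, continuous_inclusion Set.subset_union_left⟩
  let ιb : C(spectrum ℝ b, K) := ⟨_, continuous_inclusion Set.subset_union_right⟩
  let φ := (cfcHom ha).toAlgHom.comp (ContinuousMap.compStarAlgHom' ℝ ℝ ιa).toAlgHom
  let ψ := (cfcHom hb).toAlgHom.comp (ContinuousMap.compStarAlgHom' ℝ ℝ ιb).toAlgHom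
  have hφ : Continuous φ := (cfcHom_continuous ha).comp (ContinuousMap.continuous_precomp ιa)
  have hψ : Continuous ψ := (cfcHom_continuous hb).comp (ContinuousMap.continuous_precomp ιb)
  have hφa : φ (.restrict K (.id ℝ)) = a := cfcHom_id ha
  have hψb : ψ (.restrict K (.id ℝ)) = b := cfcHom_id hb
  rw [cfc_apply f a ha (hf.mono Set.subset_union_left),
    cfc_apply f b hb (hf.mono Set.subset_union_right)]
  exact ContinuousMap.semiconjBy_of_semiconjBy_restrict_id hφ hψ (hφa ▸ hψb ▸ h)
    ⟨K.domRestrict f, hf.domRestrict⟩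

theorem SemiconjBy.eq_zero_of_disjoint_spectrum {a b x : A} (h : SemiconjBy x a b)
    (ha : IsSelfAdjoint a) (hb : IsSelfAdjoint b)
    (hab : Disjoint (spectrum ℝ a) (spectrum ℝ b)) : x = 0 := by
  obtain ⟨f, hfb, hfa, -⟩ := exists_continuous_zero_one_of_isClosed
    (ContinuousFunctionalCalculus.isCompact_spectrum b).isClosed
    (ContinuousFunctionalCalculus.isCompact_spectrum a).isClosed hab.symm
  have hfa' : cfc f a = 1 := (cfc_congr hfa).trans (cfc_one ℝ a)
  have hfb' : cfc f b = 0 := (cfc_congr hfb).trans (cfc_zero ℝ b)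
  simpa [hfa', hfb', SemiconjBy] using h.cfc_real ha hb f f.continuous.continuousOn

end Intertwining

open ContinuousLinearMap in
theorem sq_root_skewAdjoint_of_spectrum_im_disjoint
    {H : Type*} [NormedAddCommGroup H] [InnerProductSpace ℂ H] [CompleteSpace H]
    (T A B C : H →L[ℂ] H) (hA : IsSelfAdjoint A) (hB : IsSelfAdjoint B)
    (hC : IsSelfAdjoint C) (hT : T = A + Complex.I • B) (hsq : T ^ 2 = C)
    (hspec : spectrum ℂ B ∩ spectrum ℂ (-B) = ∅) :
    ContinuousLinearMap.adjoint T = -T ∧ IsUnit T ∧ T = Complex.I • B := by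
  have hspecℝ : Disjoint (spectrum ℝ B) (spectrum ℝ (-B)) := by
    rw [← spectrum.preimage_algebraMap ℂ, ← spectrum.preimage_algebraMap ℂ (a := -B)]
    exact (Set.disjoint_iff_inter_eq_empty.mpr hspec).preimage _
  have hBunit : IsUnit B := by
    refine (spectrum.zero_notMem_iff ℂ).mp fun h0 => hspec.subset ⟨h0, ?_⟩
    rw [← spectrum.neg_eq, Set.mem_neg, neg_zero]
    exact h0
  have hAB : SemiconjBy A B (-B) := hA.semiconjBy_neg_of_isSelfAdjoint_sq hB (hT ▸ hsq ▸ hC)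
  have hTB : T = Complex.I • B := by
    rw [hT, hAB.eq_zero_of_disjoint_spectrum hB hB.neg hspecℝ, zero_add]
  refine ⟨?_, hTB ▸ hBunit.smul (Units.mk0 Complex.I Complex.I_ne_zero), hTB⟩
  rw [← star_eq_adjoint, hTB, star_smul, hB.star_eq, Complex.star_def, Complex.conj_I, neg_smul]
end

section
/- Let N = C + iD be a bounded normal operator on a complex Hilbert space with D ≥ 0. Then T = ((|N|+C)/2)^{1/2} + i((|N|-C)/2)^{1/2} is a normal operator satisfying T² = N. -/
/-!
Write `a = x + i y` with `x = ℜ a`, `y = ℑ a`; normality makes `x` and `y` commute, so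
`|a|² = x² + y² ≥ x²` and, `√` being operator monotone, `-|a| ≤ x ≤ |a|`. Hence
`P = (|a| + x)/2` and `Q = (|a| - x)/2` are commuting positive elements with `P - Q = x` and
`P Q = y²/4`. When `y ≥ 0` this gives `√P √Q = √(P Q) = y/2`, so
`(√P + i √Q)² = P - Q + 2i √P √Q = a`, and `√P + i √Q` is normal because its real and
imaginary parts `√P`, `√Q` commute.
-/

section

open ComplexStarModule Complex CFC
open scoped ComplexOrder

section StarModule

variable {A : Type*} [AddCommGroup A] [Module ℂ A] [StarAddMonoid A] [StarModule ℂ A]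

lemma realPart_add_I_smul {x y : A} (hx : IsSelfAdjoint x) (hy : IsSelfAdjoint y) :
    (ℜ (x + I • y) : A) = x := by
  simp [realPart_I_smul, hx.coe_realPart, hy.imaginaryPart]

lemma imaginaryPart_add_I_smul {x y : A} (hx : IsSelfAdjoint x) (hy : IsSelfAdjoint y) :
    (ℑ (x + I • y) : A) = y := by
  simp [imaginaryPart_I_smul, hx.imaginaryPart, hy.coe_realPart]

end StarModule

lemma isStarNormal_add_I_smul {A : Type*} [NonUnitalNonAssocRing A] [StarRing A] [Module ℂ A]
    [IsScalarTower ℂ A A] [SMulCommClass ℂ A A] [StarModule ℂ A] {x y : A}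
    (hx : IsSelfAdjoint x) (hy : IsSelfAdjoint y) (h : Commute x y) :
    IsStarNormal (x + I • y) := by
  rwa [isStarNormal_iff_commute_realPart_imaginaryPart, realPart_add_I_smul hx hy,
    imaginaryPart_add_I_smul hx hy]

lemma Commute.add_I_smul_sq {A : Type*} [Ring A] [Algebra ℂ A] {x y : A} (h : Commute x y) :
    (x + I • y) ^ 2 = x * x - y * y + (2 * I) • (x * y) := by
  rw [sq]
  simp only [mul_add, add_mul, smul_mul_assoc, mul_smul_comm, h.eq]
  match_scalars <;> simp [two_mul]

variable {A : Type*} [CStarAlgebra A] [PartialOrder A] [StarOrderedRing A]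

namespace CFC

lemma le_abs {a : A} (ha : IsSelfAdjoint a) : a ≤ abs a := by
  rw [← sub_nonneg, abs_sub_self a]
  exact smul_nonneg (by norm_num) (negPart_nonneg a)

lemma neg_le_abs {a : A} (ha : IsSelfAdjoint a) : -a ≤ abs a := by
  simpa using le_abs ha.neg

lemma _root_.Commute.cfcSqrt_cfcSqrt {a b : A} (h : Commute a b) :
    Commute (sqrt a) (sqrt b) :=
  (h.cfcₙ_nnreal _).symm.cfcₙ_nnreal _ |>.symm

lemma sqrt_mul_sqrt_of_commute {a b : A} (ha : 0 ≤ a) (hb : 0 ≤ b) (h : Commute a b) :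
    sqrt a * sqrt b = sqrt (a * b) := by
  have hsqrt := h.cfcSqrt_cfcSqrt
  refine (sqrt_unique ?_ (hsqrt.mul_nonneg (sqrt_nonneg a) (sqrt_nonneg b))).symm
  rw [hsqrt.symm.mul_mul_mul_comm, sqrt_mul_sqrt_self a, sqrt_mul_sqrt_self b]

section Normal

variable (a : A) [IsStarNormal a]

lemma abs_realPart_le : abs (ℜ a : A) ≤ abs a := by
  refine sqrt_le_sqrt _ _ ?_
  rw [(ℜ a).2.star_eq, star_mul_self_eq_realPart_sq_add_imaginaryPart_sq]
  exact le_add_of_nonneg_right (ℑ a).2.mul_self_nonneg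

lemma realPart_le_abs : (ℜ a : A) ≤ abs a :=
  (le_abs (ℜ a).2).trans (abs_realPart_le a)

lemma neg_realPart_le_abs : -(ℜ a : A) ≤ abs a :=
  (neg_le_abs (ℜ a).2).trans (abs_realPart_le a)

lemma commute_abs_realPart : Commute (abs a) (ℜ a) := by
  refine Commute.cfcₙ_nnreal ?_ _
  rw [star_mul_self_eq_realPart_sq_add_imaginaryPart_sq]
  have h := Commute.realPart_imaginaryPart a
  exact ((Commute.refl _).mul_left (.refl _)).add_left (h.symm.mul_left h.symm)

lemma commute_abs_add_realPart_abs_sub_realPart :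
    Commute (abs a + ℜ a) (abs a - ℜ a) :=
  have h := commute_abs_realPart a
  ((Commute.refl _).sub_right h).add_left (h.symm.sub_right (.refl _))

lemma abs_add_realPart_mul_abs_sub_realPart :
    (abs a + ℜ a) * (abs a - ℜ a) = ℑ a * ℑ a := by
  rw [add_mul, mul_sub, mul_sub, (commute_abs_realPart a).eq, abs_mul_abs,
    star_mul_self_eq_realPart_sq_add_imaginaryPart_sq]
  abel

end Normal

end CFC

open CFC

noncomputable def normalSqrt (a : A) : A :=
  sqrt ((2 : ℂ)⁻¹ • (abs a + ℜ a)) + I • sqrt ((2 : ℂ)⁻¹ • (abs a - ℜ a))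

section Normal

variable (a : A) [IsStarNormal a]

lemma commute_sqrt_half_abs_add_sub_realPart :
    Commute (sqrt ((2 : ℂ)⁻¹ • (abs a + ℜ a))) (sqrt ((2 : ℂ)⁻¹ • (abs a - ℜ a))) :=
  (commute_abs_add_realPart_abs_sub_realPart a).smul_left _ |>.smul_right _ |>.cfcSqrt_cfcSqrt

theorem isStarNormal_normalSqrt : IsStarNormal (normalSqrt a) :=
  isStarNormal_add_I_smul (sqrt_nonneg _).isSelfAdjoint (sqrt_nonneg _).isSelfAdjoint
    (commute_sqrt_half_abs_add_sub_realPart a)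

theorem normalSqrt_sq (ha : 0 ≤ (ℑ a : A)) : normalSqrt a ^ 2 = a := by
  have hP : 0 ≤ (2 : ℂ)⁻¹ • (abs a + ℜ a) :=
    smul_nonneg (by positivity) (neg_le_iff_add_nonneg.mp (neg_realPart_le_abs a))
  have hQ : 0 ≤ (2 : ℂ)⁻¹ • (abs a - ℜ a) :=
    smul_nonneg (by positivity) (sub_nonneg.mpr (realPart_le_abs a))
  have hPQ : sqrt ((2 : ℂ)⁻¹ • (abs a + ℜ a)) * sqrt ((2 : ℂ)⁻¹ • (abs a - ℜ a)) =
      (2 : ℂ)⁻¹ • (ℑ a : A) := by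
    rw [sqrt_mul_sqrt_of_commute hP hQ
      ((commute_abs_add_realPart_abs_sub_realPart a).smul_left _ |>.smul_right _),
      smul_mul_smul_comm, abs_add_realPart_mul_abs_sub_realPart, ← smul_mul_smul_comm,
      sqrt_mul_self _ (smul_nonneg (by positivity) ha)]
  rw [normalSqrt, (commute_sqrt_half_abs_add_sub_realPart a).add_I_smul_sq,
    sqrt_mul_sqrt_self _ hP, sqrt_mul_sqrt_self _ hQ, hPQ]
  conv_rhs => rw [← realPart_add_I_smul_imaginaryPart a]
  module

end Normal

end

open ContinuousLinearMap in
theorem normal_sqrt_of_im_nonneg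
    {H : Type*} [NormedAddCommGroup H] [InnerProductSpace ℂ H] [CompleteSpace H]
    (N C D : H →L[ℂ] H) (hC : IsSelfAdjoint C) (hD : IsSelfAdjoint D)
    (hN : N = C + Complex.I • D) (hnormal : IsStarNormal N) (hD0 : 0 ≤ D) :
    IsStarNormal (CFC.sqrt ((2 : ℂ)⁻¹ • (CFC.sqrt (star N * N) + C)) +
        Complex.I • CFC.sqrt ((2 : ℂ)⁻¹ • (CFC.sqrt (star N * N) - C))) ∧
    (CFC.sqrt ((2 : ℂ)⁻¹ • (CFC.sqrt (star N * N) + C)) +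
        Complex.I • CFC.sqrt ((2 : ℂ)⁻¹ • (CFC.sqrt (star N * N) - C))) ^ 2 = N := by
  have hre : (realPart N : H →L[ℂ] H) = C := hN ▸ realPart_add_I_smul hC hD
  have him : (imaginaryPart N : H →L[ℂ] H) = D := hN ▸ imaginaryPart_add_I_smul hC hD
  rw [← hre]
  -- `CFC.abs N` unfolds to `CFC.sqrt (star N * N)`
  exact ⟨isStarNormal_normalSqrt N, normalSqrt_sq N (him ▸ hD0)⟩
end
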